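/- arXiv:1910.07404 — 6 statements merged into one kernel-verified Lean document; each statement's English description precedes it below -/
import Mathlib

section
/- Let L be a field and M an L-vector space of finite dimension r ≥ 1. Let ℓ ∈ M* and let f : M → M* be a linear map that is symmetric, i.e. f(x)(y) = f(y)(x) for all x, y ∈ M. Then for every x ∈ M and every x₁, …, x_r ∈ M one has, in ⋀^r M*: Σ_{i=1}^r f(x)(x_i) · ( f(x₁) ∧ ⋯ ∧ f(x_{i−1}) ∧ ℓ ∧ f(x_{i+1}) ∧ ⋯ ∧ f(x_r) ) = ℓ(x) · ( f(x₁) ∧ ⋯ ∧ f(x_r) ). -/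
open Module
open ExteriorAlgebra

set_option maxHeartbeats 1000000
set_option synthInstance.maxHeartbeats 400000

/-- The wedge product of `n` vectors, as an element of the `n`-th exterior power
`⋀[L]^n V` (viewed as a submodule of the exterior algebra). -/
noncomputable def wedgeProd (L : Type*) [Field L] (V : Type*) [AddCommGroup V] [Module L V]
    (n : ℕ) (v : Fin n → V) : ⋀[L]^n V :=
  ⟨ExteriorAlgebra.ιMulti L n v, ExteriorAlgebra.ιMulti_range L n ⟨v, rfl⟩⟩

theorem key_contract (L : Type*) [Field L] (V : Type*) [AddCommGroup V] [Module L V]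
    (e : Module.Dual L V) :
    ∀ (n : ℕ) (ℓ : V) (v : Fin n → V),
      ι L ℓ * CliffordAlgebra.contractLeft (Q := (0 : QuadraticForm L V)) e
          ((List.ofFn fun i => ι L (v i)).prod)
        = ∑ i : Fin n, e (v i) • (List.ofFn fun j => ι L (Function.update v i ℓ j)).prod := by
  intro n
  induction n with
  | zero =>
      intro ℓ v
      simp [CliffordAlgebra.contractLeft_one]
  | succ n ih =>
      intro ℓ v
      set ε := CliffordAlgebra.contractLeft (Q := (0 : QuadraticForm L V)) e with hε
      rw [List.ofFn_succ, List.prod_cons]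
      rw [show (fun i : Fin n => ι L (v i.succ)) = fun i => ι L (Fin.tail v i) from rfl]
      rw [CliffordAlgebra.contractLeft_ι_mul]
      rw [mul_sub, mul_smul_comm]
      have swap : ι L ℓ * ι L (v 0) = -(ι L (v 0) * ι L ℓ) :=
        eq_neg_of_add_eq_zero_left (ι_add_mul_swap ℓ (v 0))
      have anticom : ι L ℓ * (ι L (v 0) * ε ((List.ofFn fun i => ι L (Fin.tail v i)).prod))
          = -(ι L (v 0) * (ι L ℓ * ε ((List.ofFn fun i => ι L (Fin.tail v i)).prod))) := by
        rw [← mul_assoc, swap, neg_mul, mul_assoc]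
      rw [anticom, sub_neg_eq_add, ih ℓ (Fin.tail v), Finset.mul_sum]
      rw [Fin.sum_univ_succ]
      congr 1
      · -- i = 0 term
        have htail : (fun j : Fin n => ι L (Function.update v 0 ℓ j.succ))
            = fun j => ι L (Fin.tail v j) := by
          funext j
          rw [show Function.update v 0 ℓ j.succ = Fin.tail (Function.update v 0 ℓ) j from rfl,
            Fin.tail_update_zero]
        rw [List.ofFn_succ, List.prod_cons, Function.update_self, htail]
      · -- succ terms
        refine Finset.sum_congr rfl fun i _ => ?_
        rw [mul_smul_comm]
        have htail : (fun j : Fin n => ι L (Function.update v i.succ ℓ j.succ))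
            = fun j => ι L (Function.update (Fin.tail v) i ℓ j) := by
          funext j
          rw [show Function.update v i.succ ℓ j.succ
              = Fin.tail (Function.update v i.succ ℓ) j from rfl, Fin.tail_update_succ]
        rw [show e (Fin.tail v i) = e (v i.succ) from rfl]
        congr 1
        rw [List.ofFn_succ, List.prod_cons, Function.update_of_ne (Fin.succ_ne_zero i).symm, htail]

theorem aux_wedge (L : Type*) [Field L] (V : Type*) [AddCommGroup V] [Module L V]
    [FiniteDimensional L V] (r : ℕ) (hdim : Module.finrank L V = r)
    (e : Module.Dual L V) (ℓ : V) (v : Fin r → V) :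
    ∑ i : Fin r, e (v i) • (List.ofFn fun j => ι L (Function.update v i ℓ j)).prod
      = e ℓ • (List.ofFn fun i => ι L (v i)).prod := by
  classical
  have hdep : ¬ LinearIndependent L (Fin.cons ℓ v : Fin (r + 1) → V) := by
    intro h
    have hle := h.fintype_card_le_finrank
    rw [Fintype.card_fin, hdim] at hle
    omega
  have hzero : ExteriorAlgebra.ιMulti L (r + 1) (Fin.cons ℓ v) = 0 :=
    AlternatingMap.map_linearDependent _ _ hdep
  rw [ExteriorAlgebra.ιMulti_apply, List.ofFn_succ, List.prod_cons] at hzero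
  simp only [Fin.cons_zero, Fin.cons_succ] at hzero
  have hcontr := congrArg
    (CliffordAlgebra.contractLeft (Q := (0 : QuadraticForm L V)) e) hzero
  rw [CliffordAlgebra.contractLeft_ι_mul, map_zero] at hcontr
  have hkey := key_contract L V e r ℓ v
  rw [← hkey]
  exact (sub_eq_zero.mp hcontr).symm

/-- Let `L` be a field and `M` an `L`-vector space of finite dimension `r ≥ 1`.  Let
`ℓ ∈ M*` and let `f : M → M*` be a linear map that is symmetric, i.e.
`f(x)(y) = f(y)(x)` for all `x, y ∈ M`.  Then for every `x ∈ M` and every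
`x₁, …, x_r ∈ M` one has, in `⋀^r M*`:
`Σ_{i=1}^r f(x)(x_i) · (f(x₁) ∧ ⋯ ∧ f(x_{i−1}) ∧ ℓ ∧ f(x_{i+1}) ∧ ⋯ ∧ f(x_r))
  = ℓ(x) · (f(x₁) ∧ ⋯ ∧ f(x_r))`. -/
theorem wedge_identity_of_symmetric
    (L : Type*) [Field L] (M : Type*) [AddCommGroup M] [Module L M]
    [FiniteDimensional L M] (r : ℕ) (hr : 1 ≤ r) (hdim : Module.finrank L M = r)
    (ℓ : Module.Dual L M) (f : M →ₗ[L] Module.Dual L M)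
    (hsym : ∀ x y : M, f x y = f y x)
    (x : M) (xs : Fin r → M) :
    ∑ i : Fin r,
        f x (xs i) • wedgeProd L (Module.Dual L M) r (Function.update (fun j => f (xs j)) i ℓ)
      = ℓ x • wedgeProd L (Module.Dual L M) r (fun j => f (xs j)) := by
  classical
  have hdual : Module.finrank L (Module.Dual L M) = r := by
    rw [Subspace.dual_finrank_eq, hdim]
  have halg := aux_wedge L (Module.Dual L M) r hdual (Module.Dual.eval L M x) ℓ
    (fun j => f (xs j))
  have hcoe : ∀ (w : Fin r → Module.Dual L M),
      ((wedgeProd L (Module.Dual L M) r w : ⋀[L]^r (Module.Dual L M)) :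
        ExteriorAlgebra L (Module.Dual L M))
      = (List.ofFn fun i => ι L (w i)).prod := fun w => by
    rw [show ((wedgeProd L (Module.Dual L M) r w : ⋀[L]^r (Module.Dual L M)) :
        ExteriorAlgebra L (Module.Dual L M))
        = ExteriorAlgebra.ιMulti L r w from rfl, ExteriorAlgebra.ιMulti_apply]
  have hev : ∀ i, f x (xs i) = Module.Dual.eval L M x (f (xs i)) := fun i => by
    rw [hsym x (xs i)]; rfl
  apply Subtype.ext
  simp only [Submodule.coe_sum, SetLike.val_smul, hcoe]
  simp only [hev]
  exact halg
end

section
/- Let L be a field, M an L-vector space of dimension r ≥ 1, and N ⊆ M a subspace with inclusion ι : N → M; let ι* : M* → N* denote the restriction map, and let ℓ ∈ M* be a surjective linear functional with kernel equal to N (so that 0 → N → M → L → 0 is exact). Let f : M → M* and g : M → N* be linear maps such that (a) g = ι* ∘ f, and (b) f(x)(y) = f(y)(x) for all x, y ∈ M. Let δ₀ : ⋀^{r−1} N* → ⋀^r M* be any linear map satisfying δ₀((ι*φ₁) ∧ ⋯ ∧ (ι*φ_{r−1})) = ℓ ∧ φ₁ ∧ ⋯ ∧ φ_{r−1} for all φ₁,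 …, φ_{r−1} ∈ M*. Then for every x ∈ M and every x₁, …, x_r ∈ M one has, in ⋀^r M*: Σ_{i=1}^r (−1)^{i+1} f(x)(x_i) · δ₀( g(x₁) ∧ ⋯ ∧ g(x_{i−1}) ∧ g(x_{i+1}) ∧ ⋯ ∧ g(x_r) ) = ℓ(x) · ( f(x₁) ∧ ⋯ ∧ f(x_r) ). -/
open Module

lemma contract_ιMulti {R : Type*} [CommRing R] {V : Type*} [AddCommGroup V] [Module R V]
    (d : Module.Dual R V) : ∀ (n : ℕ) (v : Fin (n + 1) → V),
    CliffordAlgebra.contractLeft (Q := (0 : QuadraticForm R V)) d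
        (ExteriorAlgebra.ιMulti R (n + 1) v)
      = ∑ i : Fin (n + 1), ((-1 : R) ^ (i : ℕ) * d (v i)) •
          ExteriorAlgebra.ιMulti R n (v ∘ i.succAbove) := by
  intro n
  induction n with
  | zero =>
      intro v
      rw [ExteriorAlgebra.ιMulti_succ_apply, ExteriorAlgebra.ιMulti_zero_apply, mul_one, CliffordAlgebra.contractLeft_ι]
      simp [Algebra.algebraMap_eq_smul_one]
  | succ m ih =>
      intro v
      rw [ExteriorAlgebra.ιMulti_succ_apply, CliffordAlgebra.contractLeft_ι_mul]
      have htail : Matrix.vecTail v = Fin.tail v := rfl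
      rw [htail, ih (Fin.tail v)]
      rw [Finset.mul_sum]
      conv_rhs => rw [Fin.sum_univ_succ]
      have h0 : v ∘ (0 : Fin (m + 2)).succAbove = Fin.tail v := by
        funext j; simp [Fin.succAbove_zero, Fin.tail]
      rw [Fin.val_zero, pow_zero, one_mul, h0, sub_eq_add_neg]
      congr 1
      rw [← Finset.sum_neg_distrib]
      apply Finset.sum_congr rfl
      intro i _
      rw [mul_smul_comm]
      have h1 : ExteriorAlgebra.ι R (v 0) * ExteriorAlgebra.ιMulti R m (Fin.tail v ∘ i.succAbove)
          = ExteriorAlgebra.ιMulti R (m + 1) (v ∘ (i.succ).succAbove) := by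
        rw [ExteriorAlgebra.ιMulti_succ_apply]
        have h2 : v ∘ (i.succ).succAbove = Fin.cons (v 0) (Fin.tail v ∘ i.succAbove) := by
          funext j
          refine Fin.cases ?_ (fun k => ?_) j
          · simp [Fin.succ_succAbove_zero]
          · simp [Fin.succ_succAbove_succ, Fin.tail]
        rw [h2]
        congr 1
      rw [h1, ← neg_smul]
      congr 1
      have : d (Fin.tail v i) = d (v i.succ) := rfl
      rw [this, Fin.val_succ, pow_succ]
      ring

lemma ιMulti_top_zero {R : Type*} [Field R] {V : Type*} [AddCommGroup V] [Module R V]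
    [FiniteDimensional R V] {n : ℕ} (hn : Module.finrank R V < n) (v : Fin n → V) :
    ExteriorAlgebra.ιMulti R n v = 0 := by
  apply AlternatingMap.map_linearDependent
  intro h
  have := h.fintype_card_le_finrank
  simp only [Fintype.card_fin] at this
  omega

set_option maxHeartbeats 1000000 in
set_option synthInstance.maxHeartbeats 200000 in
/-- Lemma 5.6 ('alg') of the paper.  Let `L` be a field, `M` an `L`-vector space of
dimension `r ≥ 1` (written `r = r' + 1` below), and `N ⊆ M` a subspace with inclusion
`ι : N → M`; let `ι* : M* → N*` denote the restriction map, and let `ℓ ∈ M*` be a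
surjective linear functional with kernel `N` (so `0 → N → M → L → 0` is exact).  Let
`f : M → M*` and `g : M → N*` be linear maps with (a) `g = ι* ∘ f` and
(b) `f(x)(y) = f(y)(x)` for all `x, y ∈ M`.  Let `δ₀ : ⋀^{r−1} N* → ⋀^r M*` be any
linear map satisfying `δ₀((ι*φ₁) ∧ ⋯ ∧ (ι*φ_{r−1})) = ℓ ∧ φ₁ ∧ ⋯ ∧ φ_{r−1}` for all
`φ₁, …, φ_{r−1} ∈ M*`.  Then for every `x ∈ M` and `x₁, …, x_r ∈ M` one has, in
`⋀^r M*`: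
`Σ_{i=1}^r (−1)^{i+1} f(x)(x_i) · δ₀(g(x₁) ∧ ⋯ ∧ g(x_{i−1}) ∧ g(x_{i+1}) ∧ ⋯ ∧ g(x_r))
  = ℓ(x) · (f(x₁) ∧ ⋯ ∧ f(x_r))`.
(Indices are zero-based below, so the sign `(−1)^{i+1}` of the `1`-based formula
becomes `(−1)^i`.) -/
theorem wedge_identity_bockstein
    (L : Type*) [Field L] (M : Type*) [AddCommGroup M] [Module L M]
    [FiniteDimensional L M] (r' : ℕ) (hdim : Module.finrank L M = r' + 1)
    (N : Submodule L M) (ℓ : Module.Dual L M)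
    (hsurj : Function.Surjective ℓ) (hker : LinearMap.ker ℓ = N)
    (f : M →ₗ[L] Module.Dual L M) (g : M →ₗ[L] Module.Dual L ↥N)
    (hg : ∀ x : M, g x = N.subtype.dualMap (f x))
    (hsym : ∀ x y : M, f x y = f y x)
    (δ₀ : ⋀[L]^r' (Module.Dual L ↥N) →ₗ[L] ⋀[L]^(r' + 1) (Module.Dual L M))
    (hδ₀ : ∀ φ : Fin r' → Module.Dual L M,
      δ₀ (wedgeProd L (Module.Dual L ↥N) r' (fun j => N.subtype.dualMap (φ j)))
        = wedgeProd L (Module.Dual L M) (r' + 1) (Fin.cons ℓ φ))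
    (x : M) (xs : Fin (r' + 1) → M) :
    ∑ i : Fin (r' + 1),
        ((-1 : L) ^ (i : ℕ) * f x (xs i)) •
          δ₀ (wedgeProd L (Module.Dual L ↥N) r' (fun j => g (xs (i.succAbove j))))
      = ℓ x • wedgeProd L (Module.Dual L M) (r' + 1) (fun j => f (xs j)) := by
  classical
  -- replace δ₀ terms using hδ₀ and hg
  have hterm : ∀ i : Fin (r' + 1),
      δ₀ (wedgeProd L (Module.Dual L ↥N) r' (fun j => g (xs (i.succAbove j))))
        = wedgeProd L (Module.Dual L M) (r' + 1) (Fin.cons ℓ (fun j => f (xs (i.succAbove j)))) := by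
    intro i
    rw [show (fun j => g (xs (i.succAbove j)))
        = (fun j => N.subtype.dualMap ((fun j => f (xs (i.succAbove j))) j)) by
      funext j; exact hg _]
    exact hδ₀ _
  simp only [hterm]
  -- pass to the exterior algebra
  apply Subtype.ext
  simp only [AddSubmonoidClass.coe_finset_sum, SetLike.val_smul]
  have hcoe : ∀ (n : ℕ) (v : Fin n → Module.Dual L M), (wedgeProd L (Module.Dual L M) n v : ExteriorAlgebra L (Module.Dual L M))
      = ExteriorAlgebra.ιMulti L n v := fun n v => rfl
  simp only [hcoe]
  -- the contraction identity applied to `Fin.cons ℓ (f ∘ xs)`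
  set φ : Fin (r' + 1) → Module.Dual L M := fun j => f (xs j) with hφ
  set w : Fin (r' + 2) → Module.Dual L M := Fin.cons ℓ φ with hw
  have hdual : Module.finrank L (Module.Dual L M) = r' + 1 := by
    rw [Subspace.dual_finrank_eq, hdim]
  have htop : ExteriorAlgebra.ιMulti L (r' + 2) w = 0 :=
    ιMulti_top_zero (by omega) w
  have hc := contract_ιMulti (Module.Dual.eval L M x) (r' + 1) w
  rw [htop, map_zero, Fin.sum_univ_succ] at hc
  have hsucc0 : w ∘ (0 : Fin (r' + 2)).succAbove = φ := by
    funext j; simp [hw, Fin.succAbove_zero]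
  have hwc : ∀ i : Fin (r' + 1),
      w ∘ (i.succ).succAbove = Fin.cons ℓ (fun j => f (xs (i.succAbove j))) := by
    intro i; funext j
    refine Fin.cases ?_ (fun k => ?_) j
    · simp [hw, Fin.succ_succAbove_zero]
    · simp [hw, Fin.succ_succAbove_succ, hφ]
  rw [hsucc0] at hc
  have hterm2 : ∀ i : Fin (r' + 1),
      (((-1 : L) ^ ((i.succ : Fin (r' + 2)) : ℕ)) * (Module.Dual.eval L M x) (w i.succ)) •
          ExteriorAlgebra.ιMulti L (r' + 1) (w ∘ (i.succ).succAbove)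
        = -(((-1 : L) ^ (i : ℕ) * f x (xs i)) •
            ExteriorAlgebra.ιMulti L (r' + 1)
              (Fin.cons ℓ (fun j => f (xs (i.succAbove j))))) := by
    intro i
    rw [hwc i, ← neg_smul]
    congr 1
    have h5 : (Module.Dual.eval L M x) (w i.succ) = f (xs i) x := rfl
    rw [h5, ← hsym x (xs i), Fin.val_succ, pow_succ]
    ring
  simp only [hterm2] at hc
  rw [Finset.sum_neg_distrib] at hc
  have hfin := add_neg_eq_zero.mp hc.symm
  rw [← hfin]
  have h6 : (Module.Dual.eval L M x) (w 0) = ℓ x := rfl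
  rw [h6]
  norm_num
end

section
/- Let p be a prime number and let ℤ_p denote the ring of p-adic integers. Let P be a finitely generated free ℤ_p-module, f : P → P a ℤ_p-linear map, and Q an arbitrary ℤ_p-module. Let N be a natural number such that p^N annihilates the torsion submodule of the cokernel P / f(P). Then for every element κ of the kernel of the induced map f ⊗ id_Q : P ⊗_{ℤ_p} Q → P ⊗_{ℤ_p} Q, the element p^N · κ lies in the image of the natural map (ker f) ⊗_{ℤ_p} Q → P ⊗_{ℤ_p} Q. -/
/-!
Let `I = f(P)` and let `J ⊇ I` be its saturation, the preimage of the torsion of `P ⧸ I`.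
Over the PID `ℤ_p` the quotient `P ⧸ J` is finitely generated and torsion-free, hence free,
so `J` is a direct summand of `P` and `J ⊗ Q → P ⊗ Q` is injective. For `κ` in the kernel,
the image `y` of `κ` in `I ⊗ Q` dies in `P ⊗ Q`, hence already in `J ⊗ Q`; since `p^N`
maps `J` into `I`, this gives `p^N • y = 0`. Right exactness of `- ⊗ Q` applied to
`0 → ker f → P → I → 0` then puts `p^N • κ` in the image of `ker f ⊗ Q`.
-/

open TensorProduct

namespace LinearMap

variable {R M N : Type*} [CommRing R] [AddCommGroup M] [Module R M] [AddCommGroup N] [Module R N]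
  (Q : Type*) [AddCommGroup Q] [Module R Q]

theorem rTensor_subtype_ker_injective_of_projective [Module.Projective R N] (π : M →ₗ[R] N)
    (hπ : Function.Surjective π) : Function.Injective ((ker π).subtype.rTensor Q) := by
  obtain ⟨s, hs⟩ := Module.projective_lifting_property π LinearMap.id hπ
  obtain ⟨r, hr⟩ : ∃ r, r ∘ₗ (ker π).subtype = id :=
    ((exact_subtype_ker_map π).split_tfae (ker π).injective_subtype hπ).out 0 1
      |>.mp (⟨s, hs⟩ : ∃ s, π ∘ₗ s = id)
  refine Function.HasLeftInverse.injective ⟨r.rTensor Q, fun x => ?_⟩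
  rw [← comp_apply, ← rTensor_comp, hr, rTensor_id, id_apply]

theorem exact_rTensor_subtype_ker_rangeRestrict (f : M →ₗ[R] N) :
    Function.Exact ((ker f).subtype.rTensor Q) (f.rangeRestrict.rTensor Q) :=
  rTensor_exact Q (by rw [← ker_rangeRestrict]; exact exact_subtype_ker_map _)
    f.surjective_rangeRestrict

end LinearMap

namespace Submodule

variable {R M : Type*} [CommRing R] [AddCommGroup M] [Module R M]
  (Q : Type*) [AddCommGroup Q] [Module R Q]

theorem smul_eq_zero_of_rTensor_subtype_eq_zero {I J : Submodule R M} (hIJ : I ≤ J)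
    (hJ : Function.Injective (J.subtype.rTensor Q)) {r : R} (hr : ∀ x ∈ J, r • x ∈ I)
    {y : I ⊗[R] Q} (hy : I.subtype.rTensor Q y = 0) : r • y = 0 := by
  let g : J →ₗ[R] I := (r • J.subtype).codRestrict I fun x => hr x x.2
  have hgj : g ∘ₗ inclusion hIJ = r • LinearMap.id := rfl
  have hjy : (inclusion hIJ).rTensor Q y = 0 := hJ <| by
    rwa [map_zero, ← LinearMap.comp_apply, ← LinearMap.rTensor_comp, subtype_comp_inclusion]
  calc r • y = (g ∘ₗ inclusion hIJ).rTensor Q y := by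
        rw [hgj, LinearMap.rTensor_smul, LinearMap.rTensor_id, LinearMap.smul_apply,
          LinearMap.id_apply]
    _ = 0 := by rw [LinearMap.rTensor_comp, LinearMap.comp_apply, hjy, map_zero]

theorem rTensor_subtype_comap_mkQ_torsion_injective [IsDomain R] [IsPrincipalIdealRing R]
    [Module.Finite R M] (I : Submodule R M) :
    Function.Injective ((comap I.mkQ (torsion R (M ⧸ I))).subtype.rTensor Q) := by
  rw [← ker_mkQ (torsion R (M ⧸ I)), ← LinearMap.ker_comp]
  exact LinearMap.rTensor_subtype_ker_injective_of_projective Q _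
    ((torsion R (M ⧸ I)).mkQ_surjective.comp I.mkQ_surjective)

end Submodule

theorem pow_smul_mem_range_of_mem_ker_rTensor_general
    (p : ℕ) [Fact p.Prime]
    (P : Type*) [AddCommGroup P] [Module ℤ_[p] P]
    [Module.Finite ℤ_[p] P]
    (Q : Type*) [AddCommGroup Q] [Module ℤ_[p] Q]
    (f : P →ₗ[ℤ_[p]] P) (N : ℕ)
    (hN : ∀ x ∈ Submodule.torsion ℤ_[p] (P ⧸ LinearMap.range f),
      (p : ℤ_[p]) ^ N • x = 0)
    (κ : P ⊗[ℤ_[p]] Q) (hκ : LinearMap.rTensor Q f κ = 0) :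
    (p : ℤ_[p]) ^ N • κ ∈
      LinearMap.range (LinearMap.rTensor Q (LinearMap.ker f).subtype) := by
  set I := LinearMap.range f
  set J := Submodule.comap I.mkQ (Submodule.torsion ℤ_[p] (P ⧸ I))
  have hIJ : I ≤ J := fun x hx => by
    simp [J, (Submodule.Quotient.mk_eq_zero I).mpr hx]
  have hJI : ∀ x ∈ J, (p : ℤ_[p]) ^ N • x ∈ I := fun x hx =>
    (Submodule.Quotient.mk_eq_zero I).mp (hN _ hx)
  have hy : (p : ℤ_[p]) ^ N • f.rangeRestrict.rTensor Q κ = 0 :=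
    Submodule.smul_eq_zero_of_rTensor_subtype_eq_zero Q hIJ
      (Submodule.rTensor_subtype_comap_mkQ_torsion_injective Q I) hJI
      (by rwa [← LinearMap.comp_apply, ← LinearMap.rTensor_comp])
  rw [← (LinearMap.exact_rTensor_subtype_ker_rangeRestrict Q f).linearMap_ker_eq,
    LinearMap.mem_ker, map_smul, hy]

/-- Let `p` be a prime and `ℤ_p` the ring of `p`-adic integers.  Let `P` be a finitely
generated free `ℤ_p`-module, `f : P → P` a `ℤ_p`-linear map, and `Q` an arbitrary
`ℤ_p`-module.  Let `N` be a natural number such that `p^N` annihilates the torsion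
submodule of the cokernel `P / f(P)`.  Then for every element `κ` of the kernel of the
induced map `f ⊗ id_Q : P ⊗_{ℤ_p} Q → P ⊗_{ℤ_p} Q`, the element `p^N · κ` lies in the
image of the natural map `(ker f) ⊗_{ℤ_p} Q → P ⊗_{ℤ_p} Q`. -/
theorem pow_smul_mem_range_of_mem_ker_rTensor
    (p : ℕ) [Fact p.Prime]
    (P : Type*) [AddCommGroup P] [Module ℤ_[p] P]
    [Module.Free ℤ_[p] P] [Module.Finite ℤ_[p] P]
    (Q : Type*) [AddCommGroup Q] [Module ℤ_[p] Q]
    (f : P →ₗ[ℤ_[p]] P) (N : ℕ)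
    (hN : ∀ x ∈ Submodule.torsion ℤ_[p] (P ⧸ LinearMap.range f),
      (p : ℤ_[p]) ^ N • x = 0)
    (κ : P ⊗[ℤ_[p]] Q) (hκ : LinearMap.rTensor Q f κ = 0) :
    (p : ℤ_[p]) ^ N • κ ∈
      LinearMap.range (LinearMap.rTensor Q (LinearMap.ker f).subtype) :=
  pow_smul_mem_range_of_mem_ker_rTensor_general p P Q f N hN κ hκ
end

section
/- Let p be a prime number and ℤ_p the ring of p-adic integers. Let P be a finitely generated free ℤ_p-module, f : P → P a ℤ_p-linear map, and Q an arbitrary ℤ_p-module. Let e denote the cardinality of the torsion submodule of the cokernel P / f(P) (which is finite since P is finitely generated over ℤ_p). Suppose κ lies in the kernel of f ⊗ id_Q : P ⊗_{ℤ_p} Q → P ⊗_{ℤ_p} Q and also κ ∈ e · (P ⊗_{ℤ_p} Q). Then there exists an element κ′ in the image of the natural map (ker f) ⊗_{ℤ_p} Q → P ⊗_{ℤ_p} Q such that κ − κ′ ∈ p · (P ⊗_{ℤ_p} Q); that is, the image of κ in (P ⊗_{ℤ_p} Q) ⊗_ℤ ℤ/pℤ lies in the image of (ker f) ⊗_{ℤ_p}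 Q ⊗_ℤ ℤ/pℤ. -/
open TensorProduct

/-!
Write `N = f(P)`. By right exactness of `⊗ Q` applied to `ker f → P → N → 0`, it suffices to show
that `z = (f ⊗ Q) κ`, viewed in `N ⊗ Q`, is divisible by `p`. In Smith normal form bases
`N = ⊕ R aᵢbᵢ ⊆ P = ⊕ R bᵢ`, the vanishing of `z` in `P ⊗ Q` says `aᵢ zᵢ = 0` for its
coordinates `zᵢ`, and `aᵢ` divides `e` because `bᵢ` is torsion in `P / N`. A unit `aᵢ` forces
`zᵢ = 0`; otherwise `p ∣ aᵢ ∣ e`, and `zᵢ ∈ e Q ⊆ p Q`.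
-/

namespace IsDiscreteValuationRing

variable {R : Type*} [CommRing R] [IsDomain R] [IsDiscreteValuationRing R] {ϖ : R}

theorem dvd_of_not_isUnit (hϖ : Irreducible ϖ) {x : R} (hx : ¬IsUnit x) : ϖ ∣ x := by
  rw [← Ideal.mem_span_singleton, ← (irreducible_iff_uniformizer ϖ).1 hϖ]
  exact hx

theorem exists_eq_smul_of_smul_eq_zero {Q : Type*} [AddCommGroup Q] [Module R Q]
    (hϖ : Irreducible ϖ) {a e : R} (hae : a ∣ e) {q : Q} (ha : a • q = 0)
    (he : ∃ q', q = e • q') : ∃ r, q = ϖ • r := by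
  by_cases hu : IsUnit a
  · exact ⟨0, by rw [smul_zero, ← hu.smul_eq_zero.1 ha]⟩
  · obtain ⟨c, rfl⟩ := (dvd_of_not_isUnit hϖ hu).trans hae
    obtain ⟨q', rfl⟩ := he
    exact ⟨c • q', mul_smul ϖ c q'⟩

end IsDiscreteValuationRing

namespace Module.Basis.SmithNormalForm

variable {R M Q ι : Type*} [CommRing R] [AddCommGroup M] [Module R M]
  [AddCommGroup Q] [Module R Q] {n : ℕ} {N : Submodule R M}
  (snf : Basis.SmithNormalForm N ι n)

theorem equivFinsuppOfBasisLeft_rTensor_subtype_apply [DecidableEq ι] (z : N ⊗[R] Q) (i : Fin n) :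
    equivFinsuppOfBasisLeft snf.bM (N.subtype.rTensor Q z) (snf.f i) =
      snf.a i • equivFinsuppOfBasisLeft snf.bN z i := by
  rw [equivFinsuppOfBasisLeft_apply, equivFinsuppOfBasisLeft_apply, ← LinearMap.comp_apply,
    ← LinearMap.rTensor_comp, coord_apply_embedding_eq_smul_coord, LinearMap.rTensor_smul,
    LinearMap.smul_apply, map_smul]

theorem dvd_of_smul_mem {i : Fin n} {e : R} (he : e • snf.bM (snf.f i) ∈ N) : snf.a i ∣ e := by
  refine ⟨snf.bN.repr ⟨_, he⟩ i, ?_⟩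
  have := snf.repr_apply_embedding_eq_repr_smul ⟨_, he⟩ (i := i)
  rw [map_smul, Finsupp.smul_apply, smul_eq_mul] at this
  simpa only [Submodule.coe_mk, map_smul, Basis.repr_self, Finsupp.smul_apply,
    Finsupp.single_eq_same, smul_eq_mul, mul_one] using this

theorem a_ne_zero [Nontrivial R] (i : Fin n) : snf.a i ≠ 0 := fun h ↦
  snf.bN.ne_zero i (Subtype.ext (by simp [snf.snf, h]))

theorem mk_mem_torsion [IsDomain R] (i : Fin n) :
    Submodule.Quotient.mk (snf.bM (snf.f i)) ∈ Submodule.torsion R (M ⧸ N) := by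
  refine ⟨⟨snf.a i, mem_nonZeroDivisors_of_ne_zero (snf.a_ne_zero i)⟩, ?_⟩
  rw [Submonoid.smul_def, ← Submodule.Quotient.mk_smul, Submodule.Quotient.mk_eq_zero, ← snf.snf]
  exact (snf.bN i).2

end Module.Basis.SmithNormalForm

theorem Submodule.le_torsionBy_natCard {R M : Type*} [CommRing R] [AddCommGroup M] [Module R M]
    (S : Submodule R M) : S ≤ Submodule.torsionBy R M (Nat.card S) := fun x hx ↦ by
  rw [Submodule.mem_torsionBy_iff, Nat.cast_smul_eq_nsmul]
  simpa using congrArg Subtype.val (card_nsmul_eq_zero' (x := (⟨x, hx⟩ : S)))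

theorem Submodule.exists_eq_smul_of_rTensor_subtype_eq_zero {R M Q : Type*} [CommRing R]
    [IsDomain R] [IsDiscreteValuationRing R] [AddCommGroup M] [Module R M] [Module.Free R M]
    [Module.Finite R M] [AddCommGroup Q] [Module R Q] {ϖ : R} (hϖ : Irreducible ϖ)
    {N : Submodule R M} {e : R} (he : torsion R (M ⧸ N) ≤ torsionBy R (M ⧸ N) e)
    {z : N ⊗[R] Q} (hz : N.subtype.rTensor Q z = 0) (hze : ∃ y, z = e • y) :
    ∃ y, z = ϖ • y := by
  classical
  obtain ⟨n, snf⟩ := N.smithNormalForm (Module.Free.chooseBasis R M)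
  set c := equivFinsuppOfBasisLeft (N := Q) snf.bN
  have hcoord : ∀ i, ∃ r, c z i = ϖ • r := fun i ↦ by
    have hdvd : snf.a i ∣ e := by
      refine snf.dvd_of_smul_mem ?_
      have := he (snf.mk_mem_torsion i)
      rwa [Submodule.mem_torsionBy_iff, ← Submodule.Quotient.mk_smul,
        Submodule.Quotient.mk_eq_zero] at this
    refine IsDiscreteValuationRing.exists_eq_smul_of_smul_eq_zero hϖ hdvd ?_ ?_
    · rw [← snf.equivFinsuppOfBasisLeft_rTensor_subtype_apply, hz, map_zero,
        Finsupp.coe_zero, Pi.zero_apply]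
    · obtain ⟨y, rfl⟩ := hze
      exact ⟨c y i, by rw [map_smul, Finsupp.smul_apply]⟩
  choose r hr using hcoord
  refine ⟨c.symm (Finsupp.equivFunOnFinite.symm r), c.injective ?_⟩
  ext i
  simp [hr]

theorem LinearMap.exists_sub_mem_range_rTensor_ker_subtype {R M P Q : Type*} [CommRing R]
    [AddCommGroup M] [Module R M] [AddCommGroup P] [Module R P] [AddCommGroup Q] [Module R Q]
    (f : P →ₗ[R] M) {r : R} {κ : P ⊗[R] Q} (h : ∃ z, f.rangeRestrict.rTensor Q κ = r • z) :
    ∃ κ' ∈ range ((ker f).subtype.rTensor Q), ∃ y, κ - κ' = r • y := by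
  obtain ⟨z, hz⟩ := h
  obtain ⟨y, rfl⟩ := rTensor_surjective Q f.surjective_rangeRestrict z
  have hexact : Function.Exact (ker f).subtype f.rangeRestrict := fun x ↦ by
    simp [Subtype.ext_iff]
  refine ⟨κ - r • y, (rTensor_exact Q hexact f.surjective_rangeRestrict _).1 ?_, y,
    sub_sub_cancel _ _⟩
  rw [map_sub, map_smul, hz, sub_self]

/-- Let `p` be a prime and `ℤ_p` the ring of `p`-adic integers.  Let `P` be a finitely
generated free `ℤ_p`-module, `f : P → P` a `ℤ_p`-linear map, and `Q` an arbitrary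
`ℤ_p`-module.  Let `e` be the cardinality of the torsion submodule of the cokernel
`P / f(P)` (which is finite since `P` is finitely generated over `ℤ_p`).  Suppose `κ`
lies in the kernel of `f ⊗ id_Q : P ⊗_{ℤ_p} Q → P ⊗_{ℤ_p} Q` and also
`κ ∈ e · (P ⊗_{ℤ_p} Q)`.  Then there exists an element `κ′` in the image of the natural
map `(ker f) ⊗_{ℤ_p} Q → P ⊗_{ℤ_p} Q` such that `κ − κ′ ∈ p · (P ⊗_{ℤ_p} Q)`; that is,
the image of `κ` in `(P ⊗_{ℤ_p} Q) ⊗_ℤ ℤ/pℤ` lies in the image of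
`(ker f) ⊗_{ℤ_p} Q ⊗_ℤ ℤ/pℤ`. -/
theorem sub_mem_smul_of_mem_ker_rTensor_of_card_smul
    (p : ℕ) [Fact p.Prime]
    (P : Type*) [AddCommGroup P] [Module ℤ_[p] P]
    [Module.Free ℤ_[p] P] [Module.Finite ℤ_[p] P]
    (Q : Type*) [AddCommGroup Q] [Module ℤ_[p] Q]
    (f : P →ₗ[ℤ_[p]] P) (e : ℕ)
    (he : Nat.card (Submodule.torsion ℤ_[p] (P ⧸ LinearMap.range f)) = e)
    (κ : P ⊗[ℤ_[p]] Q) (hκ : LinearMap.rTensor Q f κ = 0)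
    (hκe : ∃ y : P ⊗[ℤ_[p]] Q, κ = (e : ℤ_[p]) • y) :
    ∃ κ' ∈ LinearMap.range (LinearMap.rTensor Q (LinearMap.ker f).subtype),
      ∃ y : P ⊗[ℤ_[p]] Q, κ - κ' = (p : ℤ_[p]) • y := by
  obtain ⟨y, rfl⟩ := hκe
  refine f.exists_sub_mem_range_rTensor_ker_subtype
    (Submodule.exists_eq_smul_of_rTensor_subtype_eq_zero PadicInt.irreducible_p
      (he ▸ Submodule.le_torsionBy_natCard _) ?_ ⟨f.rangeRestrict.rTensor Q y, map_smul _ _ _⟩)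
  rwa [← LinearMap.comp_apply, ← LinearMap.rTensor_comp, LinearMap.subtype_comp_codRestrict]
end

section
/- Let R be a commutative ring, G a finite commutative group, R[G] its group ring, and I the augmentation ideal of R[G]. Let M be a module over R[G], let γ ∈ G, let a be a natural number, let w ∈ M, and set z := (γ − 1)^a · w, where (γ − 1)^a is computed in R[G]. Then, in the tensor product M ⊗_R (R[G]/I^{a+1}), one has Σ_{σ ∈ G} (σ · z) ⊗ [σ^{−1}] = ( Σ_{σ ∈ G} σ · w ) ⊗ [(γ − 1)^a], where [x] denotes the class of x ∈ R[G] in the quotient R[G]/I^{a+1}. -/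
/-!
Write `x = (γ - 1)^a`. For each group element `g` occurring in `x`, the substitution
`τ = σ g` moves `g` across the tensor sign, so by linearity in `x`
`Σ_σ (σ x • w) ⊗ [σ⁻¹] = Σ_τ (τ • w) ⊗ [x τ⁻¹]`.
Since `x ∈ I^a` and `τ⁻¹ - 1 ∈ I`, we have `x τ⁻¹ ≡ x` modulo `I^(a+1)`, and the sum
collapses to the norm of `w` tensored with `[x]`.
-/

open TensorProduct

theorem Ideal.Quotient.mk_pow_succ_mul_eq {A : Type*} [CommRing A] {I : Ideal A} {a : ℕ}
    {x y : A} (hx : x ∈ I ^ a) (hy : y - 1 ∈ I) :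
    Ideal.Quotient.mk (I ^ (a + 1)) (x * y) = Ideal.Quotient.mk (I ^ (a + 1)) x := by
  rw [Ideal.Quotient.mk_eq_mk_iff_sub_mem, show x * y - x = x * (y - 1) by ring, pow_succ]
  exact Ideal.mul_mem_mul hx hy

namespace MonoidAlgebra

theorem of_sub_one_mem_ker_lift_one (R : Type*) [CommRing R] {G : Type*} [Monoid G] (g : G) :
    of R G g - 1 ∈ RingHom.ker (lift R R G 1) := by
  simp [RingHom.mem_ker]

theorem sum_mul_smul_tmul_of_inv {R G M N : Type*} [CommSemiring R] [Group G] [Fintype G]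
    [AddCommMonoid M] [Module R M] [Module (MonoidAlgebra R G) M]
    [IsScalarTower R (MonoidAlgebra R G) M] [AddCommMonoid N] [Module R N]
    (f : MonoidAlgebra R G →ₗ[R] N) (w : M) (x : MonoidAlgebra R G) :
    ∑ σ : G, ((of R G σ * x) • w) ⊗ₜ[R] f (of R G σ⁻¹)
      = ∑ τ : G, (of R G τ • w) ⊗ₜ[R] f (x * of R G τ⁻¹) := by
  induction x using MonoidAlgebra.induction_on with
  | of g =>
    refine Fintype.sum_equiv (Equiv.mulRight g) _ _ fun σ => ?_
    rw [Equiv.coe_mulRight, ← map_mul, ← map_mul, show g * (σ * g)⁻¹ = σ⁻¹ by group]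
  | add x y hx hy =>
    simp only [mul_add, add_mul, add_smul, map_add, tmul_add, add_tmul,
      Finset.sum_add_distrib, hx, hy]
  | smul r x hx =>
    simp only [mul_smul_comm, smul_mul_assoc, smul_assoc, map_smul, ← smul_tmul',
      tmul_smul, ← Finset.smul_sum]
    exact congrArg (r • ·) hx

end MonoidAlgebra

/-- Let `R` be a commutative ring, `G` a finite commutative group, `R[G]` its group
ring, and `I` the augmentation ideal of `R[G]` (the kernel of the `R`-algebra map
`R[G] → R` sending every group element to `1`).  Let `M` be a module over `R[G]`, let
`γ ∈ G`, let `a` be a natural number, let `w ∈ M`, and set `z := (γ − 1)^a · w`.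
Then, in `M ⊗_R (R[G]/I^{a+1})`, one has
`Σ_{σ ∈ G} (σ · z) ⊗ [σ⁻¹] = (Σ_{σ ∈ G} σ · w) ⊗ [(γ − 1)^a]`. -/
theorem darmon_norm_eq
    (R : Type*) [CommRing R] (G : Type*) [CommGroup G] [Fintype G]
    (M : Type*) [AddCommGroup M] [Module R M] [Module (MonoidAlgebra R G) M]
    [IsScalarTower R (MonoidAlgebra R G) M]
    (I : Ideal (MonoidAlgebra R G))
    (hI : I = RingHom.ker (MonoidAlgebra.lift R R G 1))
    (γ : G) (a : ℕ) (w z : M)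
    (hz : z = (MonoidAlgebra.of R G γ - 1) ^ a • w) :
    ∑ σ : G, (MonoidAlgebra.of R G σ • z) ⊗ₜ[R]
        (Ideal.Quotient.mk (I ^ (a + 1)) (MonoidAlgebra.of R G σ⁻¹))
      = (∑ σ : G, MonoidAlgebra.of R G σ • w) ⊗ₜ[R]
        (Ideal.Quotient.mk (I ^ (a + 1)) ((MonoidAlgebra.of R G γ - 1) ^ a)) := by
  have hmem : ∀ g : G, MonoidAlgebra.of R G g - 1 ∈ I :=
    hI ▸ MonoidAlgebra.of_sub_one_mem_ker_lift_one R
  subst hz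
  simp only [← mul_smul]
  refine (MonoidAlgebra.sum_mul_smul_tmul_of_inv
    (Ideal.Quotient.mkₐ R (I ^ (a + 1))).toLinearMap w _).trans ?_
  simp only [AlgHom.toLinearMap_apply, Ideal.Quotient.mkₐ_eq_mk,
    Ideal.Quotient.mk_pow_succ_mul_eq (Ideal.pow_mem_pow (hmem γ) a) (hmem _), sum_tmul]
end

section
/- Let p be a prime number, ℤ_p the ring of p-adic integers, ℚ_p the field of p-adic numbers, and Λ := ℤ_p[[T]] the ring of formal power series over ℤ_p. Let M be a finitely generated Λ-module such that: (i) the quotient M/TM is torsion-free as a ℤ_p-module, and (ii) ℚ_p ⊗_{ℤ_p} M is a free module of rank one over the ring ℚ_p ⊗_{ℤ_p} Λ. Then M is a free Λ-module of rank one. -/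
/-!
Write `N = M/XM`. Since `X` kills `N`, a power series acts on `N` through its constant
coefficient, so `N` is a finitely generated torsion-free, hence free, `ℤ_p`-module. Tensoring with
`ℚ_p` is right exact, so reducing `M ⊗ ℚ_p ≅ Λ ⊗ ℚ_p` modulo `X` gives `N ⊗ ℚ_p ≅ ℚ_p`, and `N` has
rank one. As `X` lies in the Jacobson radical of `Λ`, Nakayama's lemma shows that any lift `m` of a
generator of `N` generates `M`. Finally `M` is faithful, because its annihilator also kills
`M ⊗ ℚ_p ≅ Λ ⊗ ℚ_p`, into which `Λ` embeds coefficientwise; so `f ↦ f • m` is an isomorphism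
`Λ ≅ M`.
-/

open TensorProduct PowerSeries Pointwise

theorem LinearMap.range_lsmul_eq_smul_top {Λ Y : Type*} [CommRing Λ] [AddCommGroup Y]
    [Module Λ Y] (x : Λ) : LinearMap.range (LinearMap.lsmul Λ Y x) = x • ⊤ := by
  rw [Submodule.pointwise_smul_def, Submodule.map_top]; rfl

section
variable {R Λ : Type*} [CommRing R] [CommRing Λ] [Algebra R Λ] (x : Λ)
  (Y : Type*) [AddCommGroup Y] [Module Λ Y] [Module R Y] [IsScalarTower R Λ Y]
  (K : Type*) [AddCommGroup K] [Module R K]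

theorem LinearMap.restrictScalars_lsmul_tensor :
    (LinearMap.lsmul Λ (Y ⊗[R] K) x).restrictScalars R =
      ((LinearMap.lsmul Λ Y x).restrictScalars R).rTensor K :=
  TensorProduct.ext' fun _ _ => smul_tmul' x _ _

noncomputable def QuotSMulTop.tensorEquiv :
    QuotSMulTop x Y ⊗[R] K ≃ₗ[R] QuotSMulTop x (Y ⊗[R] K) :=
  have hexact : Function.Exact ((LinearMap.lsmul Λ Y x).restrictScalars R)
      ((x • ⊤ : Submodule Λ Y).mkQ.restrictScalars R) := by
    rw [LinearMap.exact_iff, LinearMap.ker_restrictScalars, Submodule.ker_mkQ,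
      ← LinearMap.range_lsmul_eq_smul_top]; rfl
  have hrange : LinearMap.range (((LinearMap.lsmul Λ Y x).restrictScalars R).rTensor K) =
      (x • ⊤ : Submodule Λ (Y ⊗[R] K)).restrictScalars R := by
    rw [← LinearMap.restrictScalars_lsmul_tensor, ← LinearMap.range_lsmul_eq_smul_top]; rfl
  have hsurj : Function.Surjective ((x • ⊤ : Submodule Λ Y).mkQ.restrictScalars R) := by
    rw [LinearMap.coe_restrictScalars]; exact Submodule.mkQ_surjective _
  (rTensor.equiv K hexact hsurj).symm ≪≫ₗ
    Submodule.quotEquivOfEq _ _ hrange ≪≫ₗ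
    Submodule.Quotient.restrictScalarsEquiv R (x • ⊤ : Submodule Λ (Y ⊗[R] K))

theorem Module.annihilator_le_annihilator_tensor :
    Module.annihilator Λ Y ≤ Module.annihilator Λ (Y ⊗[R] K) := by
  intro a ha
  rw [Module.mem_annihilator_iff_lsmul_eq_zero] at ha ⊢
  apply LinearMap.restrictScalars_injective R
  rw [LinearMap.restrictScalars_lsmul_tensor, ha]
  simp

end

theorem LinearMap.bijective_toSpanSingleton {Λ Y : Type*} [CommRing Λ] [AddCommGroup Y]
    [Module Λ Y] {m : Y} (hm : Submodule.span Λ {m} = ⊤) (hY : Module.annihilator Λ Y = ⊥) :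
    Function.Bijective (LinearMap.toSpanSingleton Λ Y m) := by
  constructor
  · rw [← LinearMap.ker_eq_bot, ← Submodule.annihilator_span_singleton, hm,
      Submodule.annihilator_top, hY]
  · rw [← LinearMap.range_eq_top, ← LinearMap.span_singleton_eq_range, hm]

theorem Module.finrank_eq_one_of_baseChange_equiv {R K N : Type*} [CommRing R] [IsDomain R]
    [Field K] [Algebra R K] [IsFractionRing R K] [AddCommGroup N] [Module R N] [Module.Free R N]
    (e : K ⊗[R] N ≃ₗ[R] K) : Module.finrank R N = 1 := by
  let eK : K ⊗[R] N ≃ₗ[K] K := .ofBijective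
    (LinearMap.extendScalarsOfIsLocalization (nonZeroDivisors R) K e.toLinearMap) e.bijective
  rw [← Module.finrank_baseChange (R := K), eK.finrank_eq, Module.finrank_self]

namespace PowerSeries

variable {R : Type*} [CommRing R] {Y : Type*} [AddCommGroup Y] [Module R⟦X⟧ Y] [Module R Y]
  [IsScalarTower R R⟦X⟧ Y]

theorem smul_quotSMulTop_X (f : R⟦X⟧) (y : QuotSMulTop (X : R⟦X⟧) Y) :
    f • y = constantCoeff f • y := by
  induction y using Submodule.Quotient.induction_on with | H y => ?_
  obtain ⟨g, hg⟩ : X ∣ f - C (constantCoeff f) := X_dvd_iff.mpr (by simp)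
  rw [← Submodule.Quotient.mk_smul, ← Submodule.Quotient.mk_smul, ← sub_eq_zero,
    ← Submodule.Quotient.mk_sub, Submodule.Quotient.mk_eq_zero,
    ← algebraMap_smul R⟦X⟧ (constantCoeff f) y, ← sub_smul, ← C_eq_algebraMap, hg, mul_smul]
  exact Submodule.smul_mem_pointwise_smul _ _ _ trivial

theorem finite_quotSMulTop_X [Module.Finite R⟦X⟧ Y] :
    Module.Finite R (QuotSMulTop (X : R⟦X⟧) Y) :=
  Module.Finite.of_surjective (σ := constantCoeff)
    { toFun := Submodule.Quotient.mk
      map_add' := fun _ _ => rfl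
      map_smul' := fun f y => smul_quotSMulTop_X f (Submodule.Quotient.mk y) }
    (Submodule.Quotient.mk_surjective _)

noncomputable def quotSMulTopXEquiv : QuotSMulTop (X : R⟦X⟧) R⟦X⟧ ≃ₗ[R] R :=
  have hker : ((X : R⟦X⟧) • ⊤ : Submodule R⟦X⟧ R⟦X⟧).restrictScalars R =
      LinearMap.ker (coeff 0) := by
    ext f
    rw [Submodule.restrictScalars_mem, LinearMap.mem_ker, coeff_zero_eq_constantCoeff_apply,
      ← X_dvd_iff, Submodule.mem_smul_pointwise_iff_exists]
    simp [Dvd.dvd, eq_comm]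
  (Submodule.Quotient.restrictScalarsEquiv R _).symm ≪≫ₗ Submodule.quotEquivOfEq _ _ hker ≪≫ₗ
    (coeff (R := R) 0).quotKerEquivOfSurjective fun r => ⟨C r, coeff_zero_C r⟩

noncomputable def quotSMulTopXTensorEquiv {K : Type*} [AddCommGroup K] [Module R K]
    (e : Y ⊗[R] K ≃ₗ[R⟦X⟧] R⟦X⟧ ⊗[R] K) : QuotSMulTop (X : R⟦X⟧) Y ⊗[R] K ≃ₗ[R] K :=
  QuotSMulTop.tensorEquiv X Y K ≪≫ₗ (QuotSMulTop.congr X e).restrictScalars R ≪≫ₗ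
    (QuotSMulTop.tensorEquiv X R⟦X⟧ K).symm ≪≫ₗ
    TensorProduct.congr quotSMulTopXEquiv (LinearEquiv.refl R K) ≪≫ₗ TensorProduct.lid R K

theorem span_X_le_jacobson_bot : Ideal.span {(X : R⟦X⟧)} ≤ Ideal.jacobson ⊥ := by
  rw [Ideal.span_singleton_le_iff_mem, Ideal.mem_jacobson_bot]
  intro f
  rw [isUnit_iff_constantCoeff]
  simp

theorem span_singleton_eq_top_of_quotSMulTop_X [Module.Finite R⟦X⟧ Y] {m : Y}
    (hm : Submodule.span R {(Submodule.Quotient.mk m : QuotSMulTop (X : R⟦X⟧) Y)} = ⊤) :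
    Submodule.span R⟦X⟧ {m} = ⊤ := by
  rw [LinearMap.span_singleton_eq_range, LinearMap.range_eq_top]
  refine LinearMap.surjective_of_surjective_comp_mkQ _ _ span_X_le_jacobson_bot ?_
  rw [Submodule.ideal_span_singleton_smul]
  intro n
  obtain ⟨r, rfl⟩ := (Submodule.span_singleton_eq_top_iff R _).mp hm n
  exact ⟨C r, by simp [smul_quotSMulTop_X]⟩

theorem annihilator_tensor_eq_bot {K : Type*} [CommRing K] [Algebra R K]
    (hK : Function.Injective (algebraMap R K)) :
    Module.annihilator R⟦X⟧ (R⟦X⟧ ⊗[R] K) = ⊥ := by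
  refine eq_bot_iff.mpr fun a ha => ?_
  ext n
  have h := congr(TensorProduct.lid R K ((coeff n).rTensor K
    $(Module.mem_annihilator.mp ha ((1 : R⟦X⟧) ⊗ₜ (1 : K)))))
  rw [smul_tmul', smul_eq_mul, mul_one] at h
  simp only [LinearMap.rTensor_tmul, TensorProduct.lid_tmul, map_zero] at h
  exact hK (by simpa [Algebra.smul_def] using h)

end PowerSeries

/-- Let `p` be a prime, `ℤ_p` the `p`-adic integers, `ℚ_p` the `p`-adic numbers and
`Λ := ℤ_p[[T]]` the ring of formal power series over `ℤ_p`.  Let `M` be a finitely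
generated `Λ`-module such that: (i) the quotient `M/TM` is torsion-free as a
`ℤ_p`-module, and (ii) `ℚ_p ⊗_{ℤ_p} M` is a free module of rank one over the ring
`ℚ_p ⊗_{ℤ_p} Λ`.  Then `M` is a free `Λ`-module of rank one.

Here `ℚ_p ⊗_{ℤ_p} M` with its `ℚ_p ⊗_{ℤ_p} Λ`-module structure is realised as the base
change `(Λ ⊗_{ℤ_p} ℚ_p) ⊗_Λ M`, and "free of rank one" over a ring `S` is expressed as
the existence of an `S`-linear isomorphism with `S`. -/
theorem free_rank_one_of_quotient_torsionFree
    (p : ℕ) [Fact p.Prime]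
    (M : Type*) [AddCommGroup M]
    [Module (PowerSeries ℤ_[p]) M] [Module.Finite (PowerSeries ℤ_[p]) M]
    [Module ℤ_[p] M] [IsScalarTower ℤ_[p] (PowerSeries ℤ_[p]) M]
    (htf : Submodule.torsion ℤ_[p]
        (M ⧸ LinearMap.range (LinearMap.lsmul (PowerSeries ℤ_[p]) M
          (PowerSeries.X : PowerSeries ℤ_[p]))) = ⊥)
    (hfree : Nonempty
        ((((PowerSeries ℤ_[p]) ⊗[ℤ_[p]] ℚ_[p]) ⊗[PowerSeries ℤ_[p]] M) ≃ₗ[(PowerSeries ℤ_[p]) ⊗[ℤ_[p]] ℚ_[p]]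
          ((PowerSeries ℤ_[p]) ⊗[ℤ_[p]] ℚ_[p]))) :
    Nonempty (M ≃ₗ[PowerSeries ℤ_[p]] PowerSeries ℤ_[p]) := by
  obtain ⟨e⟩ := hfree
  let eM : M ⊗[ℤ_[p]] ℚ_[p] ≃ₗ[ℤ_[p]⟦X⟧] ℤ_[p]⟦X⟧ ⊗[ℤ_[p]] ℚ_[p] :=
    (AlgebraTensorModule.cancelBaseChange ℤ_[p] ℤ_[p]⟦X⟧ ℤ_[p]⟦X⟧ M ℚ_[p]).symm ≪≫ₗ
      TensorProduct.comm _ M _ ≪≫ₗ e.restrictScalars ℤ_[p]⟦X⟧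
  rw [LinearMap.range_lsmul_eq_smul_top] at htf
  have : Module.IsTorsionFree ℤ_[p] (QuotSMulTop (X : ℤ_[p]⟦X⟧) M) :=
    Submodule.isTorsionFree_iff_torsion_eq_bot.mpr htf
  have : Module.Finite ℤ_[p] (QuotSMulTop (X : ℤ_[p]⟦X⟧) M) := finite_quotSMulTop_X
  obtain ⟨eN⟩ := Module.nonempty_linearEquiv_of_finrank_eq_one <|
    Module.finrank_eq_one_of_baseChange_equiv (R := ℤ_[p]) (K := ℚ_[p])
      (TensorProduct.comm _ _ _ ≪≫ₗ quotSMulTopXTensorEquiv eM)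
  obtain ⟨m, hm⟩ := Submodule.Quotient.mk_surjective _ (eN 1)
  have hspan : Submodule.span ℤ_[p]⟦X⟧ {m} = ⊤ := by
    refine span_singleton_eq_top_of_quotSMulTop_X ((Submodule.span_singleton_eq_top_iff _ _).mpr
      fun n => ⟨eN.symm n, ?_⟩)
    rw [hm, ← map_smul, smul_eq_mul, mul_one, LinearEquiv.apply_symm_apply]
  have hann : Module.annihilator ℤ_[p]⟦X⟧ M = ⊥ := by
    refine le_bot_iff.mp
      ((Module.annihilator_le_annihilator_tensor (R := ℤ_[p]) M ℚ_[p]).trans ?_)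
    rw [eM.annihilator_eq, annihilator_tensor_eq_bot (IsFractionRing.injective ℤ_[p] ℚ_[p])]
  exact ⟨(LinearEquiv.ofBijective _ (LinearMap.bijective_toSpanSingleton hspan hann)).symm⟩
end
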